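/- arXiv:1006.5889 — 2 statements merged into one kernel-verified Lean document; each statement's English description precedes it below -/
import Mathlib

section
/- Every finite open cover of a compact Hausdorff space has an irreducible refinement; i.e., irreducible covers are cofinal in the directed set of finite open covers ordered by refinement. -/
open scoped Classical

variable {V : Type*} [TopologicalSpace V]

/-- A finite open cover of `V`. -/
def IsFinOpenCover (α : Finset (Set V)) : Prop :=
  (∀ A ∈ α, IsOpen A) ∧ ⋃₀ (α : Set (Set V)) = Set.univ

/-- `β` refines `α`. -/
def Refines (β α : Finset (Set V)) : Prop :=
  ∀ B ∈ β, ∃ A ∈ α, B ⊆ A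

/-- The `k`-simplices of the nerve of `α`: the `(k+1)`-element subsets of `α`
with nonempty common intersection. -/
noncomputable def nerveSimplices (α : Finset (Set V)) (k : ℕ) : Finset (Finset (Set V)) :=
  α.powerset.filter fun s => s.card = k + 1 ∧ (⋂₀ (s : Set (Set V))).Nonempty

/-- A simplicial embedding of the nerve of `β` into the nerve of `α`, on vertices
given by `f`. -/
def NerveEmbedding (f : Set V → Set V) (β α : Finset (Set V)) : Prop :=
  Set.InjOn f ↑β ∧ (∀ B ∈ β, f B ∈ α) ∧
  ∀ s ∈ β.powerset,
    ((⋂₀ (s : Set (Set V))).Nonempty ↔ (⋂₀ ((s.image f : Finset (Set V)) : Set (Set V))).Nonempty)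

/-- `α` is irreducible: it is a finite open cover and no open refinement of `α` has
nerve isomorphic (via a simplicial embedding) to a proper subcomplex of the nerve of `α`. -/
def IsIrreducibleCover (α : Finset (Set V)) : Prop :=
  IsFinOpenCover α ∧
  ¬ ∃ (β : Finset (Set V)) (f : Set V → Set V),
      IsFinOpenCover β ∧ Refines β α ∧ NerveEmbedding f β α ∧
      ∃ k, ∃ s ∈ nerveSimplices α k, ∀ t ∈ nerveSimplices β k, t.image f ≠ s

/-! An open refinement witnessing that `α` is reducible has a nerve that embeds into the nerve
of `α` and misses one of its simplices, so it has strictly fewer simplices in total. Reducing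
repeatedly must therefore stop, and it stops at an irreducible cover refining `α`. -/

section

variable {X : Type*}

noncomputable def nerve (α : Finset (Set X)) : Finset (Finset (Set X)) :=
  α.powerset.filter fun s => (⋂₀ (s : Set (Set X))).Nonempty

lemma Refines.refl (α : Finset (Set X)) : Refines α α :=
  fun A hA => ⟨A, hA, subset_rfl⟩

lemma Refines.trans {γ β α : Finset (Set X)} (hγβ : Refines γ β) (hβα : Refines β α) :
    Refines γ α := by
  intro C hC
  obtain ⟨B, hB, hCB⟩ := hγβ C hC
  obtain ⟨A, hA, hBA⟩ := hβα B hB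
  exact ⟨A, hA, hCB.trans hBA⟩

namespace NerveEmbedding

variable {f : Set X → Set X} {β α : Finset (Set X)}

lemma image_mem_nerve (hf : NerveEmbedding f β α) {t : Finset (Set X)} (ht : t ∈ nerve β) :
    t.image f ∈ nerve α := by
  obtain ⟨htβ, htne⟩ := Finset.mem_filter.1 ht
  refine Finset.mem_filter.2 ⟨Finset.mem_powerset.2 fun A hA => ?_, (hf.2.2 t htβ).1 htne⟩
  obtain ⟨B, hB, rfl⟩ := Finset.mem_image.1 hA
  exact hf.2.1 B (Finset.mem_powerset.1 htβ hB)

lemma injOn_image_nerve (hf : NerveEmbedding f β α) :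
    Set.InjOn (Finset.image f) (nerve β : Set (Finset (Set X))) := by
  intro t₁ ht₁ t₂ ht₂ heq
  have hsub : ∀ {t}, t ∈ nerve β → (t : Set (Set X)) ⊆ β := fun ht =>
    Finset.coe_subset.2 (Finset.mem_powerset.1 (Finset.mem_filter.1 ht).1)
  rw [← Finset.coe_inj, ← hf.1.image_eq_image_iff (hsub ht₁) (hsub ht₂),
    ← Finset.coe_image, ← Finset.coe_image, heq]

lemma card_nerve_lt (hf : NerveEmbedding f β α) {k : ℕ} {s : Finset (Set X)}
    (hs : s ∈ nerveSimplices α k) (hmiss : ∀ t ∈ nerveSimplices β k, t.image f ≠ s) :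
    (nerve β).card < (nerve α).card := by
  obtain ⟨hsα, hscard, hsne⟩ := Finset.mem_filter.1 hs
  have hs_nerve : s ∈ nerve α := Finset.mem_filter.2 ⟨hsα, hsne⟩
  have hmaps : ∀ t ∈ nerve β, t.image f ∈ (nerve α).erase s := by
    intro t ht
    refine Finset.mem_erase.2 ⟨fun heq => ?_, hf.image_mem_nerve ht⟩
    obtain ⟨htβ, htne⟩ := Finset.mem_filter.1 ht
    have hcard : (t.image f).card = t.card :=
      Finset.card_image_of_injOn (hf.1.mono (Finset.coe_subset.2 (Finset.mem_powerset.1 htβ)))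
    exact hmiss t (Finset.mem_filter.2 ⟨htβ, by rw [← hcard, heq, hscard], htne⟩) heq
  calc (nerve β).card ≤ ((nerve α).erase s).card :=
        Finset.card_le_card_of_injOn _ hmaps hf.injOn_image_nerve
    _ < (nerve α).card := Finset.card_erase_lt_of_mem hs_nerve

end NerveEmbedding

end

lemma exists_refinement_card_nerve_lt {α : Finset (Set V)} (hα : IsFinOpenCover α)
    (hirr : ¬ IsIrreducibleCover α) :
    ∃ β : Finset (Set V), IsFinOpenCover β ∧ Refines β α ∧ (nerve β).card < (nerve α).card := by
  obtain ⟨β, f, hβ, hβα, hf, k, s, hs, hmiss⟩ := not_and.1 hirr hα |> not_not.1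
  exact ⟨β, hβ, hβα, hf.card_nerve_lt hs hmiss⟩

theorem exists_irreducible_refinement_general (α : Finset (Set V)) (hα : IsFinOpenCover α) :
    ∃ β : Finset (Set V), IsFinOpenCover β ∧ Refines β α ∧ IsIrreducibleCover β := by
  induction hn : (nerve α).card using Nat.strong_induction_on generalizing α with
  | _ n ih =>
    by_cases hirr : IsIrreducibleCover α
    · exact ⟨α, hα, Refines.refl α, hirr⟩
    obtain ⟨β, hβ, hβα, hlt⟩ := exists_refinement_card_nerve_lt hα hirr
    obtain ⟨γ, hγ, hγβ, hirrγ⟩ := ih _ (hn ▸ hlt) β hβ rfl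
    exact ⟨γ, hγ, hγβ.trans hβα, hirrγ⟩

/-- Irreducible covers are cofinal: every finite open cover of a compact Hausdorff
space has an irreducible refinement. -/
theorem exists_irreducible_refinement [CompactSpace V] [T2Space V]
    (α : Finset (Set V)) (hα : IsFinOpenCover α) :
    ∃ β : Finset (Set V), IsFinOpenCover β ∧ Refines β α ∧ IsIrreducibleCover β :=
  exists_irreducible_refinement_general α hα
end

section
/- Let f : V → V and h : W → W be expansive ℕ-actions on compact metric spaces with fixed points v₀, w₀ respectively. Then the induced map f ∧ h on the smash product V ∧ W (with base points v₀, w₀) defines an expansive ℕ²-action: there exists ε > 0 (for a suitable metric on V ∧ W) such that any two distinct points of V ∧ W are separated to distance > ε by some (f^{n₁} ∧ h^{n₂}). -/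
/-- The setoid on `V × W` defining the smash product `V ∧ W` with base points
`v₀, w₀`: all points of the wedge `V × {w₀} ∪ {v₀} × W` are identified. -/
def smashSetoid {V W : Type*} (v₀ : V) (w₀ : W) : Setoid (V × W) where
  r p q := p = q ∨ ((p.1 = v₀ ∨ p.2 = w₀) ∧ (q.1 = v₀ ∨ q.2 = w₀))
  iseqv := by
    refine ⟨fun p => Or.inl rfl, ?_, ?_⟩
    · rintro p q (rfl | h)
      · exact Or.inl rfl
      · exact Or.inr ⟨h.2, h.1⟩
    · rintro p q r (rfl | h) (rfl | h')
      · exact Or.inl rfl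
      · exact Or.inr h'
      · exact Or.inr h
      · exact Or.inr ⟨h.1, h'.2⟩

/-- The smash product `V ∧ W`, as a topological quotient of `V × W`. -/
def SmashProd {V W : Type*} [TopologicalSpace V] [TopologicalSpace W]
    (v₀ : V) (w₀ : W) : Type _ :=
  Quotient (smashSetoid v₀ w₀)

instance {V W : Type*} [TopologicalSpace V] [TopologicalSpace W] (v₀ : V) (w₀ : W) :
    TopologicalSpace (SmashProd v₀ w₀) :=
  instTopologicalSpaceQuotient

/-! The smash product is the quotient of `V × W` collapsing the closed wedge
`A = V × {w₀} ∪ {v₀} × W`, and `min (d(p, q), d(p, A) + d(q, A))` (go directly, or through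
the collapsed point) is a metric on it which, by compactness, induces the quotient topology.

For separation let `c = min cV cW` and `p ∉ A`. Since the base points are fixed, each coordinate
of `p` can be iterated (independently) to distance `> c` from its base point, which puts the
iterate of `p` at distance `> c` from `A`. If the iterate of `q` is then `c/2`-close to `A`, the
distances to `A` already separate the two points. Otherwise iterate only the coordinate in which
`p` and `q` differ until it expands beyond `c`: the other coordinates stay `c/2`-far from the base
point, so both the direct distance and the path through `A` remain above `c/4`. -/

noncomputable section

open Metric

theorem MetricSpace.toTopologicalSpace_eq_coinduced {X Y : Type*} [TopologicalSpace X]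
    [CompactSpace X] [m : MetricSpace Y] {π : X → Y} (hπ : Function.Surjective π)
    (hπc : Continuous π) :
    m.toUniformSpace.toTopologicalSpace = TopologicalSpace.coinduced π ‹_› :=
  (Topology.IsQuotientMap.of_surjective_continuous hπ hπc).eq_coinduced

section Collapse

variable {X : Type*} [MetricSpace X] (A : Set X)

def collapseDist (p q : X) : ℝ := min (dist p q) (infDist p A + infDist q A)

variable {A}

theorem collapseDist_le_dist (p q : X) : collapseDist A p q ≤ dist p q := min_le_left _ _

theorem collapseDist_comm (p q : X) : collapseDist A p q = collapseDist A q p := by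
  rw [collapseDist, collapseDist, dist_comm, add_comm]

theorem collapseDist_self (p : X) : collapseDist A p p = 0 :=
  le_antisymm ((collapseDist_le_dist p p).trans_eq (dist_self p))
    (le_min dist_nonneg (add_nonneg infDist_nonneg infDist_nonneg))

theorem collapseDist_triangle (p q r : X) :
    collapseDist A p r ≤ collapseDist A p q + collapseDist A q r := by
  have hp : infDist p A ≤ infDist q A + dist p q := infDist_le_infDist_add_dist
  have hr : infDist r A ≤ infDist q A + dist q r := by
    rw [dist_comm]; exact infDist_le_infDist_add_dist
  have hq : 0 ≤ infDist q A := infDist_nonneg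
  have hpqr := dist_triangle p q r
  unfold collapseDist
  rcases min_choice (dist p q) (infDist p A + infDist q A) with h₁ | h₁ <;>
    rcases min_choice (dist q r) (infDist q A + infDist r A) with h₂ | h₂ <;>
    rw [h₁, h₂] <;>
    first
    | exact min_le_of_left_le (by linarith)
    | exact min_le_of_right_le (by linarith)

theorem collapseDist_of_mem_left {p : X} (hp : p ∈ A) (q : X) :
    collapseDist A p q = infDist q A := by
  rw [collapseDist, infDist_zero_of_mem hp, zero_add, dist_comm]
  exact min_eq_right (infDist_le_dist_of_mem hp)

theorem infDist_sub_infDist_le_collapseDist (p q : X) :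
    infDist p A - infDist q A ≤ collapseDist A p q := by
  have hp : infDist p A ≤ infDist q A + dist p q := infDist_le_infDist_add_dist
  have hq : 0 ≤ infDist q A := infDist_nonneg
  exact le_min (by linarith) (by linarith)

theorem collapseDist_eq_zero (hA : IsClosed A) (hA' : A.Nonempty) {p q : X}
    (h : collapseDist A p q = 0) : p = q ∨ p ∈ A ∧ q ∈ A := by
  have hp : 0 ≤ infDist p A := infDist_nonneg
  have hq : 0 ≤ infDist q A := infDist_nonneg
  rcases min_choice (dist p q) (infDist p A + infDist q A) with h' | h' <;>
    rw [collapseDist, h'] at h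
  · exact .inl (dist_eq_zero.mp h)
  · exact .inr ⟨(hA.mem_iff_infDist_zero hA').2 (by linarith),
      (hA.mem_iff_infDist_zero hA').2 (by linarith)⟩

variable {s : Setoid X}

theorem collapseDist_congr_left (hs : ∀ p q, s.r p q ↔ p = q ∨ p ∈ A ∧ q ∈ A) {p p' : X}
    (h : s.r p p') (q : X) : collapseDist A p q = collapseDist A p' q := by
  rcases (hs p p').1 h with rfl | ⟨hp, hp'⟩
  · rfl
  · rw [collapseDist_of_mem_left hp, collapseDist_of_mem_left hp']

abbrev collapseMetricSpace (hA : IsClosed A) (hA' : A.Nonempty)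
    (hs : ∀ p q, s.r p q ↔ p = q ∨ p ∈ A ∧ q ∈ A) : MetricSpace (Quotient s) where
  dist := Quotient.lift₂ (collapseDist A) fun _ _ _ _ hp hq => by
    rw [collapseDist_congr_left hs hp, collapseDist_comm, collapseDist_congr_left hs hq,
      collapseDist_comm]
  dist_self x := Quotient.inductionOn x collapseDist_self
  dist_comm x y := Quotient.inductionOn₂ x y collapseDist_comm
  dist_triangle x y z := Quotient.inductionOn₃ x y z collapseDist_triangle
  eq_of_dist_eq_zero {x y} := Quotient.inductionOn₂ x y fun _ _ h =>
    Quotient.sound ((hs _ _).2 (collapseDist_eq_zero hA hA' h))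

theorem collapseMetricSpace_topology [CompactSpace X] (hA : IsClosed A) (hA' : A.Nonempty)
    (hs : ∀ p q, s.r p q ↔ p = q ∨ p ∈ A ∧ q ∈ A) :
    (collapseMetricSpace hA hA' hs).toUniformSpace.toTopologicalSpace =
      instTopologicalSpaceQuotient :=
  letI := collapseMetricSpace hA hA' hs
  MetricSpace.toTopologicalSpace_eq_coinduced Quotient.mk_surjective
    (LipschitzWith.mk_one (f := Quotient.mk s) collapseDist_le_dist).continuous

end Collapse

theorem half_le_min_add_min {a a' b b' c : ℝ} (hc₀ : 0 ≤ c) (ha : 0 ≤ a) (ha' : 0 ≤ a')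
    (hc : c < a + a') (hb : c / 2 ≤ b) (hb' : c / 2 ≤ b') : c / 2 ≤ min a b + min a' b' := by
  rcases min_choice a b with h | h <;> rcases min_choice a' b' with h' | h' <;> rw [h, h'] <;>
    linarith

section Smash

variable {V W : Type*} [MetricSpace V] [MetricSpace W] (v₀ : V) (w₀ : W)

def wedge : Set (V × W) := {p | p.1 = v₀ ∨ p.2 = w₀}

theorem isClosed_wedge : IsClosed (wedge v₀ w₀) :=
  (isClosed_eq continuous_fst continuous_const).union
    (isClosed_eq continuous_snd continuous_const)

theorem infDist_wedge (p : V × W) :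
    infDist p (wedge v₀ w₀) = min (dist p.1 v₀) (dist p.2 w₀) := by
  refine le_antisymm (le_min ?_ ?_) ((le_infDist ⟨(v₀, w₀), .inl rfl⟩).2 ?_)
  · simpa [Prod.dist_eq] using
      infDist_le_dist_of_mem (x := p) (show (v₀, p.2) ∈ wedge v₀ w₀ from .inl rfl)
  · simpa [Prod.dist_eq] using
      infDist_le_dist_of_mem (x := p) (show (p.1, w₀) ∈ wedge v₀ w₀ from .inr rfl)
  · rintro q (rfl | rfl)
    · exact (min_le_left _ _).trans (le_max_left _ _)
    · exact (min_le_right _ _).trans (le_max_right _ _)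

abbrev smashMetricSpace : MetricSpace (SmashProd v₀ w₀) :=
  collapseMetricSpace (isClosed_wedge v₀ w₀) ⟨(v₀, w₀), .inl rfl⟩ fun _ _ => Iff.rfl

theorem smashMetricSpace_topology [CompactSpace V] [CompactSpace W] :
    (smashMetricSpace v₀ w₀).toUniformSpace.toTopologicalSpace = instTopologicalSpaceQuotient :=
  collapseMetricSpace_topology _ _ _

variable {v₀ w₀} {c : ℝ}

theorem lt_collapseDist_wedge_of_fst {P Q : V × W} (hc : 0 < c) (h₁ : c < dist P.1 Q.1)
    (hP : c / 2 ≤ dist P.2 w₀) (hQ : c / 2 ≤ dist Q.2 w₀) :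
    c / 4 < collapseDist (wedge v₀ w₀) P Q := by
  have hsum := half_le_min_add_min hc.le dist_nonneg dist_nonneg
    (h₁.trans_le (dist_triangle_right _ _ v₀)) hP hQ
  have hPQ : dist P.1 Q.1 ≤ dist P Q := (le_max_left _ _).trans_eq Prod.dist_eq.symm
  rw [collapseDist, infDist_wedge, infDist_wedge]
  exact lt_min (by linarith) (by linarith)

theorem lt_collapseDist_wedge_of_snd {P Q : V × W} (hc : 0 < c) (h₂ : c < dist P.2 Q.2)
    (hP : c / 2 ≤ dist P.1 v₀) (hQ : c / 2 ≤ dist Q.1 v₀) :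
    c / 4 < collapseDist (wedge v₀ w₀) P Q := by
  have hsum := half_le_min_add_min hc.le dist_nonneg dist_nonneg
    (h₂.trans_le (dist_triangle_right _ _ w₀)) hP hQ
  have hPQ : dist P.2 Q.2 ≤ dist P Q := (le_max_right _ _).trans_eq Prod.dist_eq.symm
  rw [collapseDist, infDist_wedge, infDist_wedge, min_comm (dist P.1 v₀),
    min_comm (dist Q.1 v₀)]
  exact lt_min (by linarith) (by linarith)

theorem exists_iterate_lt_collapseDist_wedge {f : V → V} {h : W → W} (hfv₀ : f v₀ = v₀)
    (hhw₀ : h w₀ = w₀) (hc : 0 < c)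
    (hfe : ∀ u v : V, u ≠ v → ∃ n : ℕ, c < dist (f^[n] u) (f^[n] v))
    (hhe : ∀ u v : W, u ≠ v → ∃ n : ℕ, c < dist (h^[n] u) (h^[n] v))
    {p q : V × W} (hp : p ∉ wedge v₀ w₀) (hpq : p ≠ q) :
    ∃ n₁ n₂ : ℕ, c / 4 <
      collapseDist (wedge v₀ w₀) (f^[n₁] p.1, h^[n₂] p.2) (f^[n₁] q.1, h^[n₂] q.2) := by
  obtain ⟨hp₁, hp₂⟩ := not_or.1 hp
  obtain ⟨a, ha⟩ : ∃ a, c < dist (f^[a] p.1) v₀ := by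
    simpa [Function.iterate_fixed hfv₀] using hfe _ _ hp₁
  obtain ⟨b, hb⟩ : ∃ b, c < dist (h^[b] p.2) w₀ := by
    simpa [Function.iterate_fixed hhw₀] using hhe _ _ hp₂
  by_cases hQ : infDist (f^[a] q.1, h^[b] q.2) (wedge v₀ w₀) < c / 2
  · have hP : c < infDist (f^[a] p.1, h^[b] p.2) (wedge v₀ w₀) := by
      rw [infDist_wedge]; exact lt_min ha hb
    have hdiff := infDist_sub_infDist_le_collapseDist (A := wedge v₀ w₀)
      (f^[a] p.1, h^[b] p.2) (f^[a] q.1, h^[b] q.2)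
    exact ⟨a, b, by linarith⟩
  rw [not_lt, infDist_wedge, le_min_iff] at hQ
  rcases not_and_or.1 (Prod.ext_iff.not.1 hpq) with h₁ | h₂
  · obtain ⟨n, hn⟩ := hfe _ _ h₁
    exact ⟨n, b, lt_collapseDist_wedge_of_fst hc hn (by linarith) hQ.2⟩
  · obtain ⟨n, hn⟩ := hhe _ _ h₂
    exact ⟨a, n, lt_collapseDist_wedge_of_snd hc hn (by linarith) hQ.1⟩

end Smash

end

theorem smash_expansive_general {V W : Type*} [MetricSpace V] [CompactSpace V]
    [MetricSpace W] [CompactSpace W]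
    (f : V → V) (h : W → W)
    (v₀ : V) (w₀ : W) (hfv₀ : f v₀ = v₀) (hhw₀ : h w₀ = w₀)
    (cV : ℝ) (hcV : 0 < cV) (cW : ℝ) (hcW : 0 < cW)
    (hfe : ∀ u v : V, u ≠ v → ∃ n : ℕ, cV < dist (f^[n] u) (f^[n] v))
    (hhe : ∀ u v : W, u ≠ v → ∃ n : ℕ, cW < dist (h^[n] u) (h^[n] v)) :
    ∃ m : MetricSpace (SmashProd v₀ w₀),
      m.toUniformSpace.toTopologicalSpace = instTopologicalSpaceQuotient ∧
      ∃ ε : ℝ, 0 < ε ∧ ∀ p q : V × W, ¬ (smashSetoid v₀ w₀).r p q →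
        ∃ n₁ n₂ : ℕ, ε <
          @dist (SmashProd v₀ w₀) m.toPseudoMetricSpace.toDist
            (Quotient.mk (smashSetoid v₀ w₀) (f^[n₁] p.1, h^[n₂] p.2))
            (Quotient.mk (smashSetoid v₀ w₀) (f^[n₁] q.1, h^[n₂] q.2)) := by
  have hc : 0 < min cV cW := lt_min hcV hcW
  have hfe' (u v : V) (huv : u ≠ v) : ∃ n : ℕ, min cV cW < dist (f^[n] u) (f^[n] v) :=
    (hfe u v huv).imp fun _ => (min_le_left cV cW).trans_lt
  have hhe' (u v : W) (huv : u ≠ v) : ∃ n : ℕ, min cV cW < dist (h^[n] u) (h^[n] v) :=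
    (hhe u v huv).imp fun _ => (min_le_right cV cW).trans_lt
  refine ⟨smashMetricSpace v₀ w₀, smashMetricSpace_topology v₀ w₀, min cV cW / 4,
    by positivity, fun p q hpq => ?_⟩
  have hne : p ≠ q := fun e => hpq (.inl e)
  by_cases hp : p ∈ wedge v₀ w₀
  · have hq : q ∉ wedge v₀ w₀ := fun hq => hpq (.inr ⟨hp, hq⟩)
    obtain ⟨n₁, n₂, hn⟩ :=
      exists_iterate_lt_collapseDist_wedge hfv₀ hhw₀ hc hfe' hhe' hq hne.symm
    exact ⟨n₁, n₂, (collapseDist_comm _ _).trans_gt hn⟩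
  · exact exists_iterate_lt_collapseDist_wedge hfv₀ hhw₀ hc hfe' hhe' hp hne

/-- If `f : V → V` and `h : W → W` are expansive `ℕ`-actions on compact metric
spaces fixing base points `v₀, w₀`, then the induced `ℕ²`-action
`(n₁, n₂) ↦ f^{n₁} ∧ h^{n₂}` on the smash product `V ∧ W` is expansive for a
suitable metric on `V ∧ W` inducing the quotient topology: some `ε > 0`
separates any two distinct points of `V ∧ W` under some iterate. -/
theorem smash_expansive {V W : Type*} [MetricSpace V] [CompactSpace V]
    [MetricSpace W] [CompactSpace W]
    (f : V → V) (hf : Continuous f) (h : W → W) (hh : Continuous h)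
    (v₀ : V) (w₀ : W) (hfv₀ : f v₀ = v₀) (hhw₀ : h w₀ = w₀)
    (cV : ℝ) (hcV : 0 < cV) (cW : ℝ) (hcW : 0 < cW)
    (hfe : ∀ u v : V, u ≠ v → ∃ n : ℕ, cV < dist (f^[n] u) (f^[n] v))
    (hhe : ∀ u v : W, u ≠ v → ∃ n : ℕ, cW < dist (h^[n] u) (h^[n] v)) :
    ∃ m : MetricSpace (SmashProd v₀ w₀),
      m.toUniformSpace.toTopologicalSpace = instTopologicalSpaceQuotient ∧
      ∃ ε : ℝ, 0 < ε ∧ ∀ p q : V × W, ¬ (smashSetoid v₀ w₀).r p q →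
        ∃ n₁ n₂ : ℕ, ε <
          @dist (SmashProd v₀ w₀) m.toPseudoMetricSpace.toDist
            (Quotient.mk (smashSetoid v₀ w₀) (f^[n₁] p.1, h^[n₂] p.2))
            (Quotient.mk (smashSetoid v₀ w₀) (f^[n₁] q.1, h^[n₂] q.2)) :=
  smash_expansive_general f h v₀ w₀ hfv₀ hhw₀ cV hcV cW hcW hfe hhe
end
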